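/- Smallness of domains: let D be a small category and consider diagrams of spaces over D. Every object of the form T ⊗ K, with T an orbit and K a finite simplicial set, is ℵ₀-small with respect to the class of relative cell complexes built from maps {T' ⊗ K' ↪ T' ⊗ L' : T' an orbit, K' ↪ L' an inclusion of finite simplicial sets}. That is, for every ω-sequence Z₀ → Z₁ → ⋯ of such cellular maps with colimit Z_ω, every map T ⊗ K → Z_ω factors through some finite stage Z_α. -/

import Mathlib

universe u

open CategoryTheory CategoryTheory.Limits Simplicial MonoidalCategory CartesianMonoidalCategory

namespace EquivLoc

/-- The vertex `e` of `Δ[1]`, as a morphism from the monoidal unit of `SSet`. -/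
def vertex (e : Fin 2) : (𝟙_ SSet.{u}) ⟶ Δ[1] where
  app m := TypeCat.ofHom (fun _ => SSet.stdSimplex.const 1 e m)
  naturality _ _ _ := rfl

/-- The endpoint inclusion `X ⟶ X ⊗ Δ[1]` at the vertex `e`. -/
noncomputable def cylIncl {X : SSet.{u}} (e : Fin 2) : X ⟶ X ⊗ Δ[1] :=
  lift (𝟙 X) (toUnit X ≫ vertex e)

/-- Simplicial homotopy between two maps of simplicial sets. -/
noncomputable def SHomotopic {X Z : SSet.{u}} (f g : X ⟶ Z) : Prop :=
  ∃ H : X ⊗ Δ[1] ⟶ Z, cylIncl 0 ≫ H = f ∧ cylIncl 1 ≫ H = g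

/-- A Kan complex, via the right lifting property with respect to horn inclusions. -/
def IsKan (Z : SSet.{u}) : Prop :=
  ∀ (n : ℕ) (i : Fin (n + 1)), HasLiftingProperty (SSet.horn.{u} n i).ι (toUnit Z)

/-- A (Kan) fibration of simplicial sets. -/
def SFib {X Y : SSet.{u}} (p : X ⟶ Y) : Prop :=
  ∀ (n : ℕ) (i : Fin (n + 1)), HasLiftingProperty (SSet.horn.{u} n i).ι p

/-- A trivial fibration of simplicial sets. -/
def STrivFib {X Y : SSet.{u}} (p : X ⟶ Y) : Prop :=
  ∀ (n : ℕ), HasLiftingProperty (SSet.boundary.{u} n).ι p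

/-- A weak equivalence of simplicial sets: a map inducing a bijection of simplicial
homotopy classes of maps into every Kan complex. -/
noncomputable def SWeq {X Y : SSet.{u}} (f : X ⟶ Y) : Prop :=
  ∀ Z : SSet.{u}, IsKan Z →
    (∀ g : X ⟶ Z, ∃ g' : Y ⟶ Z, SHomotopic (f ≫ g') g) ∧
    (∀ g₁ g₂ : Y ⟶ Z, SHomotopic (f ≫ g₁) (f ≫ g₂) → SHomotopic g₁ g₂)

variable (D : Type u) [SmallCategory D]

/-- The tensor of a diagram of simplicial sets with a simplicial set. -/
noncomputable def tensor (T : D ⥤ SSet.{u}) (K : SSet.{u}) : D ⥤ SSet.{u} :=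
  T ⊗ (Functor.const D).obj K

/-- Functoriality of the tensor in the simplicial set variable. -/
noncomputable def tensorMap (T : D ⥤ SSet.{u}) {K L : SSet.{u}} (i : K ⟶ L) :
    tensor D T K ⟶ tensor D T L :=
  T ◁ (Functor.const D).map i

/-- The simplicial function complex `hom(T, X)` of diagrams of simplicial sets,
with `hom(T, X)_n = Hom_D(T ⊗ Δ[n], X)`. -/
noncomputable def eHom (T X : D ⥤ SSet.{u}) : SSet.{u} where
  obj n := tensor D T (SSet.stdSimplex.obj n.unop) ⟶ X
  map φ := TypeCat.ofHom (fun g => tensorMap D T (SSet.stdSimplex.map φ.unop) ≫ g)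
  map_id n := by
    ext g : 3
    change tensorMap D T (SSet.stdSimplex.map (𝟙 n.unop)) ≫ g = g
    have h : SSet.stdSimplex.map (𝟙 n.unop) = 𝟙 _ := CategoryTheory.Functor.map_id _ _
    rw [h]
    simp [tensorMap, tensor]
    exact Category.id_comp _
  map_comp φ ψ := by
    ext g : 3
    change tensorMap D T (SSet.stdSimplex.map (ψ.unop ≫ φ.unop)) ≫ g =
      tensorMap D T (SSet.stdSimplex.map ψ.unop) ≫ tensorMap D T (SSet.stdSimplex.map φ.unop) ≫ g
    have h : SSet.stdSimplex.map (ψ.unop ≫ φ.unop) =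
        SSet.stdSimplex.map ψ.unop ≫ SSet.stdSimplex.map φ.unop :=
      CategoryTheory.Functor.map_comp _ _ _
    rw [h]
    simp [tensorMap, tensor, MonoidalCategory.whiskerLeft_comp]
    exact Category.assoc _ _ _

/-- The map induced by `p : X ⟶ Y` on simplicial function complexes. -/
noncomputable def eHomMap (T : D ⥤ SSet.{u}) {X Y : D ⥤ SSet.{u}} (p : X ⟶ Y) :
    eHom D T X ⟶ eHom D T Y where
  app n := TypeCat.ofHom (fun g => g ≫ p)
  naturality _ _ _ := by
    ext g : 3
    change _ ≫ g ≫ p = (_ ≫ g) ≫ p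
    exact (Category.assoc _ _ _).symm

/-- A `D`-diagram of simplicial sets is an orbit if its colimit is a point. -/
noncomputable def IsOrbit (T : D ⥤ SSet.{u}) : Prop :=
  Nonempty (colimit T ≅ Δ[0])

/-- Equivariant weak equivalence of diagrams. -/
noncomputable def eWeq {X Y : D ⥤ SSet.{u}} (f : X ⟶ Y) : Prop :=
  ∀ T : D ⥤ SSet.{u}, IsOrbit D T → SWeq (eHomMap D T f)

/-- Equivariant fibration of diagrams. -/
noncomputable def eFib {X Y : D ⥤ SSet.{u}} (f : X ⟶ Y) : Prop :=
  ∀ T : D ⥤ SSet.{u}, IsOrbit D T → SFib (eHomMap D T f)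

/-- Equivariant trivial fibration of diagrams. -/
noncomputable def eTrivFib {X Y : D ⥤ SSet.{u}} (f : X ⟶ Y) : Prop :=
  ∀ T : D ⥤ SSet.{u}, IsOrbit D T → STrivFib (eHomMap D T f)

/-- Equivariant cofibration: left lifting property against equivariant trivial fibrations. -/
noncomputable def eCofib {A B : D ⥤ SSet.{u}} (f : A ⟶ B) : Prop :=
  ∀ {X Y : D ⥤ SSet.{u}} (p : X ⟶ Y), eTrivFib D p → HasLiftingProperty f p

/-- A finite simplicial set: levelwise finite and of bounded dimension. -/
def IsFiniteSSet (K : SSet.{u}) : Prop :=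
  (∀ m : SimplexCategoryᵒᵖ, Finite (K.obj m)) ∧
    ∃ d : ℕ, ∀ (m : SimplexCategoryᵒᵖ) (x : K.obj m),
      ∃ (m' : SimplexCategory) (_ : m'.len ≤ d) (s : m.unop ⟶ m') (y : K.obj (Opposite.op m')),
        K.map s.op y = x




section SmallnessAux

variable {D : Type u} [SmallCategory D]

/-! ### Type-level lemmas about pushouts and pullbacks -/

lemma injective_of_isPushout {A B X Y : Type u} {a : A ⟶ X} {j : A ⟶ B} {f : X ⟶ Y} {b : B ⟶ Y}
    (h : IsPushout a j f b) (hj : Function.Injective j) : Function.Injective f := by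
  haveI : Mono j := (mono_iff_injective j).2 hj
  haveI := Adhesive.mono_of_isPushout_of_mono_right h
  exact (mono_iff_injective f).1 inferInstance

lemma range_cases_of_isPushout {A B X Y : Type u} {a : A ⟶ X} {j : A ⟶ B} {f : X ⟶ Y} {b : B ⟶ Y}
    (h : IsPushout a j f b) (y : Y) : (∃ x, f x = y) ∨ (∃ β, b β = y) := by
  obtain ⟨w, z, hz⟩ := Types.jointly_surjective _ h.isColimit y
  cases w with
  | none => exact Or.inl ⟨a z, hz⟩
  | some wl =>
    cases wl with
    | left => exact Or.inl ⟨z, hz⟩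
    | right => exact Or.inr ⟨z, hz⟩

lemma exists_of_isPullback {P X Y S : Type u} {p₁ : P ⟶ X} {p₂ : P ⟶ Y} {f : X ⟶ S} {g : Y ⟶ S}
    (h : IsPullback p₁ p₂ f g) (x : X) (y : Y) (hxy : f x = g y) :
    ∃ z, p₁ z = x ∧ p₂ z = y := by
  let l := h.lift (TypeCat.ofHom fun _ : PUnit.{u + 1} => x) (TypeCat.ofHom fun _ => y)
    (ConcreteCategory.hom_ext _ _ fun _ => hxy)
  exact ⟨l PUnit.unit, ConcreteCategory.congr_hom (h.lift_fst _ _ _) _, ConcreteCategory.congr_hom (h.lift_snd _ _ _) _⟩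

/-! ### `Δ[0]` has unique simplices -/

lemma delta0_subsingleton (m : SimplexCategoryᵒᵖ) :
    Subsingleton ((Δ[0] : SSet.{u}).obj m) := by
  constructor
  rintro ⟨x⟩ ⟨y⟩
  congr 1
  apply SimplexCategory.Hom.ext
  apply OrderHom.ext
  funext z
  apply Fin.ext
  have h1 : ((x.toOrderHom z) : ℕ) < 1 := (x.toOrderHom z).isLt
  have h2 : ((y.toOrderHom z) : ℕ) < 1 := (y.toOrderHom z).isLt
  omega

lemma delta0_nonempty (m : SimplexCategoryᵒᵖ) :
    Nonempty ((Δ[0] : SSet.{u}).obj m) :=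
  ⟨⟨SimplexCategory.Hom.mk ⟨fun _ => ⟨0, Nat.succ_pos _⟩, fun _ _ _ => le_refl _⟩⟩⟩

lemma iso_app_injective {X Y : SSet.{u}} (φ : X ≅ Y) (m : SimplexCategoryᵒᵖ) :
    Function.Injective (φ.hom.app m) := by
  intro u v huv
  have h1 := ConcreteCategory.congr_hom (congr_app φ.hom_inv_id m) u
  have h2 := ConcreteCategory.congr_hom (congr_app φ.hom_inv_id m) v
  calc u = φ.inv.app m (φ.hom.app m u) := h1.symm
  _ = φ.inv.app m (φ.hom.app m v) := congrArg _ huv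
  _ = v := h2

lemma orbit_subsingleton {T : D ⥤ SSet.{u}} (hT : IsOrbit D T) (m : SimplexCategoryᵒᵖ) :
    Subsingleton ((colimit T).obj m) := by
  obtain ⟨e⟩ := hT
  haveI := delta0_subsingleton.{u} m
  exact Equiv.subsingleton (e.app m).toEquiv

lemma orbit_nonempty {T : D ⥤ SSet.{u}} (hT : IsOrbit D T) (m : SimplexCategoryᵒᵖ) :
    Nonempty ((colimit T).obj m) := by
  obtain ⟨e⟩ := hT
  obtain ⟨pt⟩ := delta0_nonempty.{u} m
  exact ⟨(e.app m).toEquiv.symm pt⟩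

/-! ### The projection cocone of `tensor D T K` and its colimit property -/

/-- The cocone on `tensor D T K` given by the projections to `K`. -/
noncomputable def sndCocone (T : D ⥤ SSet.{u}) (K : SSet.{u}) : Cocone (tensor D T K) where
  pt := K
  ι :=
    { app := fun d => CartesianMonoidalCategory.snd (T.obj d) K
      naturality := fun d d' f => by
        apply NatTrans.ext
        funext m
        refine ConcreteCategory.hom_ext _ _ fun x => ?_
        rfl }

/-- If `T` is an orbit, the projection cocone exhibits `K` as the colimit of `tensor D T K`. -/
noncomputable def sndCoconeIsColimit {T : D ⥤ SSet.{u}} (hT : IsOrbit D T) (K : SSet.{u}) :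
    IsColimit (sndCocone T K) := by
  apply evaluationJointlyReflectsColimits
  intro m
  let Tm : D ⥤ Type u := T ⋙ (evaluation SimplexCategoryᵒᵖ (Type u)).obj m
  let F : D ⥤ Type u := tensor D T K ⋙ (evaluation SimplexCategoryᵒᵖ (Type u)).obj m
  have hiso : colimit Tm ≅ (colimit T).obj m :=
    (preservesColimitIso ((evaluation SimplexCategoryᵒᵖ (Type u)).obj m) T).symm
  haveI hsub : Subsingleton (colimit Tm) := by
    haveI := orbit_subsingleton hT m
    exact Equiv.subsingleton hiso.toEquiv
  have hne : Nonempty (colimit Tm) := by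
    obtain ⟨pt⟩ := orbit_nonempty hT m
    exact ⟨hiso.toEquiv.symm pt⟩
  have hzne : Nonempty (Σ dd, Tm.obj dd) := by
    obtain ⟨p0⟩ := hne
    obtain ⟨dd, xx, _⟩ := Types.jointly_surjective' p0
    exact ⟨⟨dd, xx⟩⟩
  let z0 : Σ dd, Tm.obj dd := Classical.choice hzne
  let d₀ : D := z0.1
  let x₀ : Tm.obj d₀ := z0.2
  have key : ∀ (s : Cocone F) (d d' : D) (x : Tm.obj d) (x' : Tm.obj d') (c : K.obj m),
      s.ι.app d ((x, c) : (T.obj d).obj m × K.obj m)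
        = s.ι.app d' ((x', c) : (T.obj d').obj m × K.obj m) := by
    intro s d d' x x' c
    have h2 := Types.colimit_eq (Subsingleton.elim (colimit.ι Tm d x) (colimit.ι Tm d' x'))
    have H : ∀ (pq pq' : Σ dd, Tm.obj dd), Relation.EqvGen Tm.ColimitTypeRel pq pq' →
        s.ι.app pq.1 ((pq.2, c) : (T.obj pq.1).obj m × K.obj m)
          = s.ι.app pq'.1 ((pq'.2, c) : (T.obj pq'.1).obj m × K.obj m) := by
      intro pq pq' h
      induction h with
      | rel p q hr =>
        obtain ⟨f, hf⟩ := hr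
        have hw := ConcreteCategory.congr_hom (s.w f) ((p.2, c) : (T.obj p.1).obj m × K.obj m)
        calc s.ι.app p.1 ((p.2, c) : (T.obj p.1).obj m × K.obj m)
            = s.ι.app q.1 ((Tm.map f p.2, c) : (T.obj q.1).obj m × K.obj m) := hw.symm
        _ = s.ι.app q.1 ((q.2, c) : (T.obj q.1).obj m × K.obj m) := by rw [hf]
      | refl _ => rfl
      | symm _ _ _ ih => exact ih.symm
      | trans _ _ _ _ _ ih1 ih2 => exact ih1.trans ih2
    exact H ⟨d, x⟩ ⟨d', x'⟩ h2
  exact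
    { desc := fun s => TypeCat.ofHom fun c => s.ι.app d₀ ((x₀, c) : (T.obj d₀).obj m × K.obj m)
      fac := fun s d => ConcreteCategory.hom_ext _ _ fun x => key s d₀ d x₀ x.1 x.2
      uniq := fun s mdesc hm => ConcreteCategory.hom_ext _ _ fun c =>
        ConcreteCategory.congr_hom (hm d₀) ((x₀, c) : (T.obj d₀).obj m × K.obj m) }

/-! ### The `GoodMap` predicate -/

/-- A map of diagrams is good if it is levelwise injective, injective on `D`-colimits, and the
square formed with the colimit projections is an (elementwise) pullback. -/
def GoodMap {X Y : D ⥤ SSet.{u}} (f : X ⟶ Y) : Prop :=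
  (∀ (d : D) (m : SimplexCategoryᵒᵖ), Function.Injective ((f.app d).app m)) ∧
  (∀ m : SimplexCategoryᵒᵖ, Function.Injective ((colim.map f).app m)) ∧
  (∀ (d : D) (m : SimplexCategoryᵒᵖ) (y : (Y.obj d).obj m),
    (colimit.ι Y d).app m y ∈ Set.range ((colim.map f).app m) →
      y ∈ Set.range ((f.app d).app m))

lemma good_id (X : D ⥤ SSet.{u}) : GoodMap (𝟙 X) := by
  refine ⟨fun d m => ?_, fun m => ?_, fun d m y _ => ⟨y, rfl⟩⟩
  · exact fun x y h => h
  · rw [CategoryTheory.Functor.map_id]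
    exact fun x y h => h

lemma good_comp {X Y W : D ⥤ SSet.{u}} {f : X ⟶ Y} {g : Y ⟶ W}
    (hf : GoodMap f) (hg : GoodMap g) : GoodMap (f ≫ g) := by
  obtain ⟨hf1, hf2, hf3⟩ := hf
  obtain ⟨hg1, hg2, hg3⟩ := hg
  refine ⟨fun d m => ?_, fun m => ?_, fun d m y hy => ?_⟩
  · exact fun x x' hxx => hf1 d m (hg1 d m hxx)
  · rw [Functor.map_comp]
    exact fun x x' hxx => hf2 m (hg2 m hxx)
  · obtain ⟨ξ, hξ⟩ := hy
    rw [Functor.map_comp] at hξ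
    obtain ⟨y₁, hy₁⟩ := hg3 d m y ⟨(colim.map f).app m ξ, hξ⟩
    have hnat := ConcreteCategory.congr_hom (congr_app (colimit.ι_map (α := g) d) m) y₁
    -- hnat : (colim.map g).app m ((colimit.ι Y d).app m y₁) = (colimit.ι W d).app m ((g.app d).app m y₁)
    have hinj : (colimit.ι Y d).app m y₁ = (colim.map f).app m ξ := by
      apply hg2 m
      calc (colim.map g).app m ((colimit.ι Y d).app m y₁)
          = (colimit.ι W d).app m ((g.app d).app m y₁) := hnat
      _ = (colimit.ι W d).app m y := by rw [hy₁]
      _ = (colim.map g).app m ((colim.map f).app m ξ) := hξ.symm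
    obtain ⟨x, hx⟩ := hf3 d m y₁ ⟨ξ, hinj.symm⟩
    refine ⟨x, ?_⟩
    calc ((f ≫ g).app d).app m x = (g.app d).app m ((f.app d).app m x) := rfl
    _ = (g.app d).app m y₁ := by rw [hx]
    _ = y := hy₁

/-! ### Goodness of tensored finite inclusions over orbits -/

lemma tensorMap_comp_snd {T' : D ⥤ SSet.{u}} {K' L' : SSet.{u}} (i : K' ⟶ L') (d : D) :
    (tensorMap D T' i).app d ≫ CartesianMonoidalCategory.snd (T'.obj d) L' =
      CartesianMonoidalCategory.snd (T'.obj d) K' ≫ i := by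
  apply NatTrans.ext
  funext m
  refine ConcreteCategory.hom_ext _ _ fun x => ?_
  rfl

lemma good_tensorMap {T' : D ⥤ SSet.{u}} (hT' : IsOrbit D T') {K' L' : SSet.{u}}
    (i : K' ⟶ L') (hi : Mono i) : GoodMap (tensorMap D T' i) := by
  haveI := hi
  have hA := sndCoconeIsColimit hT' K'
  have hB := sndCoconeIsColimit hT' L'
  let φA : colimit (tensor D T' K') ≅ K' :=
    (colimit.isColimit _).coconePointUniqueUpToIso hA
  let φB : colimit (tensor D T' L') ≅ L' :=
    (colimit.isColimit _).coconePointUniqueUpToIso hB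
  have hφA : ∀ d, colimit.ι (tensor D T' K') d ≫ φA.hom
      = CartesianMonoidalCategory.snd (T'.obj d) K' := fun d =>
    (colimit.isColimit _).comp_coconePointUniqueUpToIso_hom hA d
  have hφB : ∀ d, colimit.ι (tensor D T' L') d ≫ φB.hom
      = CartesianMonoidalCategory.snd (T'.obj d) L' := fun d =>
    (colimit.isColimit _).comp_coconePointUniqueUpToIso_hom hB d
  have hsq : colim.map (tensorMap D T' i) ≫ φB.hom = φA.hom ≫ i := by
    apply colimit.hom_ext
    intro d
    rw [colimit.ι_map_assoc, hφB d, ← Category.assoc, hφA d, tensorMap_comp_snd]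
    rfl
  refine ⟨fun d m => ?_, fun m => ?_, fun d m y hy => ?_⟩
  · intro x y hxy
    haveI : Mono (i.app m) := inferInstance
    have hxy' : ((x.1, i.app m x.2) : (T'.obj d).obj m × L'.obj m) = (y.1, i.app m y.2) := hxy
    have h1 := congrArg Prod.fst hxy'
    have h2 := congrArg Prod.snd hxy'
    exact Prod.ext_iff.mpr ⟨h1, (mono_iff_injective (i.app m)).1 inferInstance h2⟩
  · intro x y hxy
    haveI : Mono (i.app m) := inferInstance
    have h1 := ConcreteCategory.congr_hom (congr_app hsq m) x
    have h2 := ConcreteCategory.congr_hom (congr_app hsq m) y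
    apply iso_app_injective φA m
    apply (mono_iff_injective (i.app m)).1 inferInstance
    calc i.app m (φA.hom.app m x) = φB.hom.app m ((colim.map (tensorMap D T' i)).app m x) := h1.symm
    _ = φB.hom.app m ((colim.map (tensorMap D T' i)).app m y) := by rw [hxy]
    _ = i.app m (φA.hom.app m y) := h2
  · obtain ⟨ξ, hξ⟩ := hy
    have e1 : φB.hom.app m ((colimit.ι (tensor D T' L') d).app m y) = y.2 :=
      ConcreteCategory.congr_hom (congr_app (hφB d) m) y
    have e2 : φB.hom.app m ((colim.map (tensorMap D T' i)).app m ξ)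
        = i.app m (φA.hom.app m ξ) := ConcreteCategory.congr_hom (congr_app hsq m) ξ
    have e3 : y.2 = i.app m (φA.hom.app m ξ) := by
      rw [← e1, ← hξ]
      exact e2
    refine ⟨(y.1, φA.hom.app m ξ), ?_⟩
    exact Prod.ext_iff.mpr ⟨rfl, e3.symm⟩

/-! ### Goodness is stable under pushout -/

lemma good_of_pushout {A B X Y : D ⥤ SSet.{u}} {a : A ⟶ X} {j : A ⟶ B} {f : X ⟶ Y} {b : B ⟶ Y}
    (h : IsPushout a j f b) (hj : GoodMap j) : GoodMap f := by
  obtain ⟨hj1, hj2, hj3⟩ := hj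
  have hdm : ∀ (d : D) (m : SimplexCategoryᵒᵖ),
      IsPushout ((a.app d).app m) ((j.app d).app m) ((f.app d).app m) ((b.app d).app m) :=
    fun d m =>
      (h.map ((evaluation D SSet.{u}).obj d)).map ((evaluation SimplexCategoryᵒᵖ (Type u)).obj m)
  have hΓ : ∀ m : SimplexCategoryᵒᵖ,
      IsPushout ((colim.map a).app m) ((colim.map j).app m)
        ((colim.map f).app m) ((colim.map b).app m) :=
    fun m => (h.map colim).map ((evaluation SimplexCategoryᵒᵖ (Type u)).obj m)
  refine ⟨fun d m => injective_of_isPushout (hdm d m) (hj1 d m),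
    fun m => injective_of_isPushout (hΓ m) (hj2 m), fun d m y hy => ?_⟩
  obtain ⟨ξ, hξ⟩ := hy
  rcases range_cases_of_isPushout (hdm d m) y with ⟨x, hx⟩ | ⟨β, hβ⟩
  · exact ⟨x, hx⟩
  · haveI : Mono ((colim.map j).app m) := (mono_iff_injective _).2 (hj2 m)
    have hpb := Adhesive.isPullback_of_isPushout_of_mono_right (hΓ m)
    have hnat := ConcreteCategory.congr_hom (congr_app (colimit.ι_map (α := b) d) m) β
    -- hnat : (colim.map b).app m ((colimit.ι B d).app m β) = (colimit.ι Y d).app m ((b.app d).app m β)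
    have hxy : (colim.map f).app m ξ = (colim.map b).app m ((colimit.ι B d).app m β) := by
      have h5 : (colim.map b).app m ((colimit.ι B d).app m β)
          = (colimit.ι Y d).app m ((b.app d).app m β) := hnat
      rw [h5, hβ]
      exact hξ
    obtain ⟨α, hα1, hα2⟩ := exists_of_isPullback hpb ξ ((colimit.ι B d).app m β) hxy
    obtain ⟨α', hα'⟩ := hj3 d m β ⟨α, hα2⟩
    refine ⟨(a.app d).app m α', ?_⟩
    calc ((f.app d).app m) ((a.app d).app m α') = ((b.app d).app m) ((j.app d).app m α') :=
      ConcreteCategory.congr_hom (hdm d m).w α'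
    _ = (b.app d).app m β := by rw [hα']
    _ = y := hβ

end SmallnessAux

/-- Smallness of domains: `T ⊗ K` is `ℵ₀`-small relative to cellular maps built from
maps `T' ⊗ K' ↪ T' ⊗ L'` with `T'` an orbit and `K' ↪ L'` an inclusion of finite
simplicial sets. -/
theorem tensor_orbit_finite_small {D : Type u} [SmallCategory D]
    (Z : ℕ ⥤ (D ⥤ SSet.{u}))
    (hyp : ∀ n : ℕ, ∃ (T' : D ⥤ SSet.{u}) (_ : IsOrbit D T')
      (K' L' : SSet.{u}) (i : K' ⟶ L') (_ : Mono i)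
      (_ : IsFiniteSSet K') (_ : IsFiniteSSet L')
      (a : tensor D T' K' ⟶ Z.obj n) (b : tensor D T' L' ⟶ Z.obj (n + 1)),
        IsPushout a (tensorMap D T' i) (Z.map (homOfLE (Nat.le_succ n))) b)
    (c : Cocone Z) (hc : IsColimit c)
    (T : D ⥤ SSet.{u}) (hT : IsOrbit D T) (K : SSet.{u}) (hK : IsFiniteSSet K)
    (k : tensor D T K ⟶ c.pt) :
    ∃ (n : ℕ) (g : tensor D T K ⟶ Z.obj n), g ≫ c.ι.app n = k := by
  classical
  obtain ⟨hKfin, dbd, hgen⟩ := hK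
  -- Goodness of all connecting maps of the cellular sequence.
  have hstep : ∀ n : ℕ, GoodMap (Z.map (homOfLE (Nat.le_succ n))) := by
    intro n
    obtain ⟨T', hT', K', L', i, hi, _, _, a, b, hpo⟩ := hyp n
    exact good_of_pushout hpo (good_tensorMap hT' i hi)
  have hle : ∀ {n n' : ℕ} (h : n ≤ n'), GoodMap (Z.map (homOfLE h)) := by
    intro n n' h
    induction n', h using Nat.le_induction with
    | base =>
      have heq : Z.map (homOfLE (le_refl n)) = 𝟙 (Z.obj n) := by
        rw [Subsingleton.elim (homOfLE (le_refl n)) (𝟙 n), Z.map_id]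
      exact heq ▸ good_id (Z.obj n)
    | succ n' hn ih =>
      have heq : Z.map (homOfLE (Nat.le_succ_of_le hn))
          = Z.map (homOfLE hn) ≫ Z.map (homOfLE (Nat.le_succ n')) := by
        rw [← Z.map_comp]
        congr 1
      exact heq ▸ good_comp ih (hstep n')
  -- Levelwise colimit cocones.
  have hdm : ∀ (d : D) (m : SimplexCategoryᵒᵖ), IsColimit
      ((((evaluation D SSet.{u}).obj d ⋙
        (evaluation SimplexCategoryᵒᵖ (Type u)).obj m)).mapCocone c) := fun d m =>
    isColimitOfPreserves ((evaluation SimplexCategoryᵒᵖ (Type u)).obj m)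
      (isColimitOfPreserves ((evaluation D SSet.{u}).obj d) hc)
  have hΓm : ∀ m : SimplexCategoryᵒᵖ, IsColimit
      ((colim ⋙ (evaluation SimplexCategoryᵒᵖ (Type u)).obj m).mapCocone c) := fun m =>
    isColimitOfPreserves _ hc
  -- Levelwise injectivity of the cocone legs.
  have W1 : ∀ (n : ℕ) (d : D) (m : SimplexCategoryᵒᵖ),
      Function.Injective (((c.ι.app n).app d).app m) := by
    intro n d m x y hxy
    obtain ⟨n', fm, gm, hfg⟩ := (Types.FilteredColimit.isColimit_eq_iff _ (hdm d m)).1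
      (show ((((evaluation D SSet.{u}).obj d ⋙
        (evaluation SimplexCategoryᵒᵖ (Type u)).obj m)).mapCocone c).ι.app n x = _ from hxy)
    rw [Subsingleton.elim fm (homOfLE (leOfHom fm)),
      Subsingleton.elim gm (homOfLE (leOfHom fm))] at hfg
    exact (hle (leOfHom fm)).1 d m hfg
  have W2 : ∀ (n : ℕ) (m : SimplexCategoryᵒᵖ),
      Function.Injective ((colim.map (c.ι.app n)).app m) := by
    intro n m x y hxy
    obtain ⟨n', fm, gm, hfg⟩ := (Types.FilteredColimit.isColimit_eq_iff _ (hΓm m)).1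
      (show ((colim ⋙ (evaluation SimplexCategoryᵒᵖ (Type u)).obj m).mapCocone c).ι.app n x
        = _ from hxy)
    rw [Subsingleton.elim fm (homOfLE (leOfHom fm)),
      Subsingleton.elim gm (homOfLE (leOfHom fm))] at hfg
    exact (hle (leOfHom fm)).2.1 m hfg
  -- The pullback property at the colimit.
  have W3 : ∀ (N' : ℕ) (d : D) (m : SimplexCategoryᵒᵖ) (y : (c.pt.obj d).obj m),
      (colimit.ι c.pt d).app m y ∈ Set.range ((colim.map (c.ι.app N')).app m) →
        y ∈ Set.range (((c.ι.app N').app d).app m) := by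
    intro N' d m y hy
    obtain ⟨ξ, hξ⟩ := hy
    obtain ⟨n, x, hx⟩ := Types.jointly_surjective _ (hdm d m) y
    set x' : ((Z.obj (max n N')).obj d).obj m
      := ((Z.map (homOfLE (le_max_left n N'))).app d).app m x with hx'def
    have hyx' : y = ((c.ι.app (max n N')).app d).app m x' := by
      rw [← hx]
      exact (ConcreteCategory.congr_hom (congr_app (congr_app (c.w (homOfLE (le_max_left n N'))) d) m) x).symm
    have hξ' : (colim.map (c.ι.app (max n N'))).app m
        ((colim.map (Z.map (homOfLE (le_max_right n N')))).app m ξ)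
        = (colim.map (c.ι.app N')).app m ξ := by
      have h6 : colim.map (Z.map (homOfLE (le_max_right n N'))) ≫ colim.map (c.ι.app (max n N'))
          = colim.map (c.ι.app N') := by
        rw [← Functor.map_comp, c.w]
      exact ConcreteCategory.congr_hom (congr_app h6 m) ξ
    have hnat := ConcreteCategory.congr_hom (congr_app (colimit.ι_map (α := c.ι.app (max n N')) d) m) x'
    have hkey : (colimit.ι (Z.obj (max n N')) d).app m x'
        = (colim.map (Z.map (homOfLE (le_max_right n N')))).app m ξ := by
      apply W2 (max n N') m
      calc (colim.map (c.ι.app (max n N'))).app m ((colimit.ι (Z.obj (max n N')) d).app m x')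
          = (colimit.ι c.pt d).app m (((c.ι.app (max n N')).app d).app m x') := hnat
      _ = (colimit.ι c.pt d).app m y := by rw [← hyx']
      _ = (colim.map (c.ι.app N')).app m ξ := hξ.symm
      _ = (colim.map (c.ι.app (max n N'))).app m
          ((colim.map (Z.map (homOfLE (le_max_right n N')))).app m ξ) := hξ'.symm
    obtain ⟨x'', hx''⟩ := (hle (le_max_right n N')).2.2 d m x' ⟨ξ, hkey.symm⟩
    refine ⟨x'', ?_⟩
    have hcw := ConcreteCategory.congr_hom (congr_app (congr_app (c.w (homOfLE (le_max_right n N'))) d) m) x''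
    calc ((c.ι.app N').app d).app m x''
        = ((c.ι.app (max n N')).app d).app m
          (((Z.map (homOfLE (le_max_right n N'))).app d).app m x'') := hcw.symm
    _ = ((c.ι.app (max n N')).app d).app m x' := by rw [hx'']
    _ = y := hyx'.symm
  -- The comparison map `κ : K ⟶ colimit c.pt`.
  have hKc := sndCoconeIsColimit hT K
  let cc : Cocone (tensor D T K) :=
    { pt := colimit c.pt
      ι :=
        { app := fun d => k.app d ≫ colimit.ι c.pt d
          naturality := fun d d' f => by
            rw [← Category.assoc, k.naturality f, Category.assoc, colimit.w]
            simp } }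
  let κ : K ⟶ colimit c.pt := hKc.desc cc
  have κfac : ∀ d : D, (sndCocone T K).ι.app d ≫ κ = k.app d ≫ colimit.ι c.pt d :=
    fun d => hKc.fac cc d
  -- Finitely many generators of `K`.
  haveI hKfin' : ∀ i : Fin (dbd + 1),
      Finite (K.obj (Opposite.op (SimplexCategory.mk (i : ℕ)))) := fun i => hKfin _
  have hsurj : ∀ γ : (Σ i : Fin (dbd + 1), K.obj (Opposite.op (SimplexCategory.mk (i : ℕ)))),
      ∃ n : ℕ, κ.app (Opposite.op (SimplexCategory.mk (γ.1 : ℕ))) γ.2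
        ∈ Set.range ((colim.map (c.ι.app n)).app (Opposite.op (SimplexCategory.mk (γ.1 : ℕ)))) := by
    intro γ
    obtain ⟨n, ξ, hξ⟩ := Types.jointly_surjective _
      (hΓm (Opposite.op (SimplexCategory.mk (γ.1 : ℕ)))) (κ.app _ γ.2)
    exact ⟨n, ξ, hξ⟩
  choose nfun hn using hsurj
  obtain ⟨N, hN⟩ := (Set.finite_range nfun).bddAbove
  have hmono : ∀ {n N' : ℕ}, n ≤ N' → ∀ (m : SimplexCategoryᵒᵖ)
      (v : (colimit c.pt).obj m), v ∈ Set.range ((colim.map (c.ι.app n)).app m) →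
      v ∈ Set.range ((colim.map (c.ι.app N')).app m) := by
    intro n N' hnN m v hv
    obtain ⟨ξ, hξ⟩ := hv
    refine ⟨(colim.map (Z.map (homOfLE hnN))).app m ξ, ?_⟩
    have h7 : colim.map (Z.map (homOfLE hnN)) ≫ colim.map (c.ι.app N')
        = colim.map (c.ι.app n) := by
      rw [← Functor.map_comp, c.w]
    rw [← hξ]
    exact ConcreteCategory.congr_hom (congr_app h7 m) ξ
  -- All of `K` is supported on stage `N` after applying `κ`.
  have R : ∀ (m : SimplexCategoryᵒᵖ) (x : K.obj m),
      κ.app m x ∈ Set.range ((colim.map (c.ι.app N)).app m) := by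
    intro m x
    obtain ⟨m', hlen, s, y, hy⟩ := hgen m x
    have hyN : κ.app (Opposite.op m') y
        ∈ Set.range ((colim.map (c.ι.app N)).app (Opposite.op m')) := by
      have hmem := hn ⟨⟨m'.len, Nat.lt_succ_of_le hlen⟩, y⟩
      exact hmono (hN ⟨⟨⟨m'.len, Nat.lt_succ_of_le hlen⟩, y⟩, rfl⟩) _ _ hmem
    obtain ⟨ξ, hξ⟩ := hyN
    refine ⟨(colimit (Z.obj N)).map s.op ξ, ?_⟩
    have hnatκ := ConcreteCategory.congr_hom (κ.naturality s.op) y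
    have hnatι := ConcreteCategory.congr_hom ((colim.map (c.ι.app N)).naturality s.op) ξ
    calc (colim.map (c.ι.app N)).app m ((colimit (Z.obj N)).map s.op ξ)
        = (colimit c.pt).map s.op ((colim.map (c.ι.app N)).app (Opposite.op m') ξ) := hnatι
    _ = (colimit c.pt).map s.op (κ.app (Opposite.op m') y) := by rw [hξ]
    _ = κ.app m (K.map s.op y) := hnatκ.symm
    _ = κ.app m x := by rw [hy]
  -- The image of `k` is supported on stage `N`.
  have M : ∀ (d : D) (m : SimplexCategoryᵒᵖ) (x : ((tensor D T K).obj d).obj m),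
      (colimit.ι c.pt d).app m ((k.app d).app m x)
        ∈ Set.range ((colim.map (c.ι.app N)).app m) := by
    intro d m x
    have hfac' : κ.app m x.2 = (colimit.ι c.pt d).app m ((k.app d).app m x) :=
      ConcreteCategory.congr_hom (congr_app (κfac d) m) x
    rw [← hfac']
    exact R m x.2
  -- Construct the factorization.
  have hex : ∀ (d : D) (m : SimplexCategoryᵒᵖ) (x : ((tensor D T K).obj d).obj m),
      ∃ z : ((Z.obj N).obj d).obj m, ((c.ι.app N).app d).app m z = (k.app d).app m x :=
    fun d m x => W3 N d m _ (M d m x)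
  choose gfun hgfun using hex
  let g : tensor D T K ⟶ Z.obj N :=
    { app := fun d =>
        { app := fun m => TypeCat.ofHom fun x => gfun d m x
          naturality := by
            intro m m' s
            refine ConcreteCategory.hom_ext _ _ fun x => ?_
            apply W1 N d m'
            have e4 := ConcreteCategory.congr_hom ((k.app d).naturality s) x
            have e3 := ConcreteCategory.congr_hom (((c.ι.app N).app d).naturality s) (gfun d m x)
            calc ((c.ι.app N).app d).app m' (gfun d m' (((tensor D T K).obj d).map s x))
                = (k.app d).app m' (((tensor D T K).obj d).map s x) := hgfun d m' _
            _ = (c.pt.obj d).map s ((k.app d).app m x) := e4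
            _ = (c.pt.obj d).map s (((c.ι.app N).app d).app m (gfun d m x)) := by
                rw [hgfun d m x]
            _ = ((c.ι.app N).app d).app m' (((Z.obj N).obj d).map s (gfun d m x)) := e3.symm }
      naturality := by
        intro d d' f
        apply NatTrans.ext
        funext m
        refine ConcreteCategory.hom_ext _ _ fun x => ?_
        apply W1 N d' m
        have e4 := ConcreteCategory.congr_hom (congr_app (k.naturality f) m) x
        have e3 := ConcreteCategory.congr_hom (congr_app ((c.ι.app N).naturality f) m) (gfun d m x)
        calc ((c.ι.app N).app d').app m (gfun d' m (((tensor D T K).map f).app m x))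
            = (k.app d').app m (((tensor D T K).map f).app m x) := hgfun d' m _
        _ = (c.pt.map f).app m ((k.app d).app m x) := e4
        _ = (c.pt.map f).app m (((c.ι.app N).app d).app m (gfun d m x)) := by
            rw [hgfun d m x]
        _ = ((c.ι.app N).app d').app m (((Z.obj N).map f).app m (gfun d m x)) := e3.symm }
  refine ⟨N, g, ?_⟩
  apply NatTrans.ext
  funext d
  apply NatTrans.ext
  funext m
  refine ConcreteCategory.hom_ext _ _ fun x => ?_
  exact hgfun d m x
end EquivLoc
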